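/- arXiv:1708.08312 — 6 statements merged into one kernel-verified Lean document; each statement's English description precedes it below -/
import Mathlib

section
/- Let L be a Lie algebra over ℚ and let m, n, p be positive integers. Then for all x, y, z ∈ L one has (n·p/((m+n)·(m+n+p)))·⁅⁅x,y⁆,z⁆ − (p/(m+n+p))·⁅x,⁅y,z⁆⁆ = (m·p/((m+n)·(m+n+p)))·⁅⁅y,x⁆,z⁆ − (p/(m+n+p))·⁅y,⁅x,z⁆⁆. (This is the left pre-Lie identity (x▶y)▶z − x▶(y▶z) = (y▶x)▶z − y▶(x▶z) for Schedler's product x▶y := (|y|/(|x|+|y|))·⁅x,y⁆ on an ℕ-graded Lie algebra with trivial degree-0 part, written out for homogeneous elements x, y, z of degrees m, n, p; hence Schedler's product is left pre-Lie.) -/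
/-- The left pre-Lie identity for Schedler's product `x ▶ y := (|y|/(|x|+|y|)) • ⁅x, y⁆`
on an ℕ-graded Lie algebra with trivial degree-zero part, written out for homogeneous
elements `x`, `y`, `z` of degrees `m`, `n`, `p`. -/
theorem schedler_preLie_identity_on_graded_lie_algebra (L : Type*) [LieRing L]
    [LieAlgebra ℚ L] (m n p : ℕ) (hm : 0 < m) (hn : 0 < n) (hp : 0 < p) (x y z : L) :
    ((n * p) / ((m + n) * (m + n + p)) : ℚ) • ⁅⁅x, y⁆, z⁆ -
        (p / (m + n + p) : ℚ) • ⁅x, ⁅y, z⁆⁆ =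
      ((m * p) / ((m + n) * (m + n + p)) : ℚ) • ⁅⁅y, x⁆, z⁆ -
        (p / (m + n + p) : ℚ) • ⁅y, ⁅x, z⁆⁆ := by
  have h1 : ((m : ℚ) + n) ≠ 0 := by positivity
  have h2 : ((m : ℚ) + n + p) ≠ 0 := by positivity
  rw [← lie_skew y x, neg_lie, lie_lie]
  match_scalars <;> field_simp <;> ring
end

section
/- The ℚ-linear endomorphism γ of A determined on basis monomials by γ(z) = f(z)·z (z ∈ FreeMagma E) is bijective, fixes every generator, and satisfies γ(u·v) = γ(u) ∗ γ(v) for all u, v ∈ A. In other words, γ is an isomorphism of magmatic algebras from (A, ·) onto (A, ∗). -/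
/-!
Both `γ` and the degree rescaling hidden in `∗` are diagonal in the monomial basis: they are
`rescale g : z ↦ g z • z` for `g = f` and `g = |·|`. Diagonal maps compose by multiplying their
weights, so `rescale f` is invertible because `f > 0` (all degrees are `≥ 1`), and
`rescale h (u * v) = rescale g₁ u * rescale g₂ v` whenever `h (x * y) = g₁ x * g₂ y`.
The recursion `f (x * y) = |x| f x f y` is this identity with `g₁ = |·| f` and `g₂ = f`, and
`rescale (|·| f)` is the degree rescaling composed with `γ`.
-/

open scoped BigOperators

/-- The additive extension of the degree function `d : E → ℕ` to the free magma. -/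
def FreeMagma.mdeg {E : Type*} (d : E → ℕ) : FreeMagma E → ℕ
  | .of a => d a
  | .mul x y => FreeMagma.mdeg d x + FreeMagma.mdeg d y

/-- The function `f : FreeMagma E → ℕ` defined by `f a = 1` on generators and
`f (x · y) = |x| · f x · f y`. -/
def FreeMagma.fcoef {E : Type*} (d : E → ℕ) : FreeMagma E → ℕ
  | .of _ => 1
  | .mul x y => FreeMagma.mdeg d x * FreeMagma.fcoef d x * FreeMagma.fcoef d y

/-- The monomial corresponding to an element of the free magma, inside the free
non-unital non-associative algebra. -/
noncomputable def magmaMonomial {E : Type*} (z : FreeMagma E) :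
    FreeNonUnitalNonAssocAlgebra ℚ E :=
  MonoidAlgebra.single z (1 : ℚ)

/-- The linear "degree rescaling" sending a monomial `z` to `|z| • z`. -/
noncomputable def degScale {E : Type*} (d : E → ℕ) (p : FreeNonUnitalNonAssocAlgebra ℚ E) :
    FreeNonUnitalNonAssocAlgebra ℚ E :=
  p.coeff.sum fun z c => MonoidAlgebra.single z ((FreeMagma.mdeg d z : ℚ) * c)

/-- The bilinear product `z ∗ w := |z| • (z · w)`, extended bilinearly from monomials. -/
noncomputable def starProd {E : Type*} (d : E → ℕ)
    (p q : FreeNonUnitalNonAssocAlgebra ℚ E) : FreeNonUnitalNonAssocAlgebra ℚ E :=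
  degScale d p * q

namespace MonoidAlgebra

variable {R M : Type*} [CommSemiring R]

noncomputable def rescale (g : M → R) : R[M] →ₗ[R] R[M] :=
  Finsupp.lsum R (fun m => g m • lsingle m) ∘ₗ (coeffLinearEquiv R).toLinearMap

theorem rescale_single (g : M → R) (m : M) (r : R) :
    rescale g (single m r) = single m (g m * r) := by
  simp [rescale, smul_single]

theorem rescale_apply (g : M → R) (p : R[M]) :
    rescale g p = p.coeff.sum fun m r => single m (g m * r) :=
  Finsupp.sum_congr fun m _ => by simp [smul_single]

theorem rescale_comp_rescale (g h : M → R) : rescale g ∘ₗ rescale h = rescale (g * h) := by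
  ext m r
  simp [rescale_single]

theorem rescale_one : rescale (1 : M → R) = LinearMap.id := by
  ext m r
  simp [rescale_single]

theorem eq_rescale_iff {γ : R[M] →ₗ[R] R[M]} {g : M → R} :
    γ = rescale g ↔ ∀ m, γ (single m 1) = g m • single m 1 := by
  refine ⟨?_, fun h => lhom_ext' fun m => LinearMap.ext_ring ?_⟩
  · rintro rfl m
    rw [rescale_single, smul_single, smul_eq_mul]
  · simp [h, rescale_single, smul_single]

theorem rescale_bijective {K : Type*} [Semifield K] {g : M → K} (hg : ∀ m, g m ≠ 0) :
    Function.Bijective (rescale g) := by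
  have hinv : g⁻¹ * g = 1 ∧ g * g⁻¹ = 1 := by
    constructor <;> ext m <;> simp [hg m]
  refine Function.bijective_iff_has_inverse.mpr ⟨rescale g⁻¹, fun p => ?_, fun p => ?_⟩
  · rw [← LinearMap.comp_apply, rescale_comp_rescale, hinv.1, rescale_one, LinearMap.id_apply]
  · rw [← LinearMap.comp_apply, rescale_comp_rescale, hinv.2, rescale_one, LinearMap.id_apply]

theorem rescale_mul [Mul M] {f g h : M → R} (hfgh : ∀ x y, f (x * y) = g x * h y) (u v : R[M]) :
    rescale f (u * v) = rescale g u * rescale h v := by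
  induction u using induction_linear with
  | zero => simp
  | add u₁ u₂ h₁ h₂ => rw [add_mul, map_add, h₁, h₂, map_add, add_mul]
  | single x r =>
    induction v using induction_linear with
    | zero => simp
    | add v₁ v₂ h₁ h₂ => rw [mul_add, map_add, h₁, h₂, map_add, mul_add]
    | single y s =>
      rw [single_mul_single, rescale_single, rescale_single, rescale_single, single_mul_single,
        hfgh, mul_mul_mul_comm]

end MonoidAlgebra

namespace FreeMagma

variable {E : Type*} (d : E → ℕ)

theorem mdeg_pos (hd : ∀ a, 1 ≤ d a) (z : FreeMagma E) : 0 < mdeg d z := by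
  induction z with
  | ih1 a => exact hd a
  | ih2 x y hx _ => exact Nat.add_pos_left hx _

theorem fcoef_pos (hd : ∀ a, 1 ≤ d a) (z : FreeMagma E) : 0 < fcoef d z := by
  induction z with
  | ih1 => exact Nat.one_pos
  | ih2 x y hx hy => exact Nat.mul_pos (Nat.mul_pos (mdeg_pos d hd x) hx) hy

theorem fcoef_mul (x y : FreeMagma E) : fcoef d (x * y) = mdeg d x * fcoef d x * fcoef d y :=
  rfl

end FreeMagma

open MonoidAlgebra in
theorem degScale_eq_rescale {E : Type*} (d : E → ℕ) :
    degScale d = rescale fun z => (FreeMagma.mdeg d z : ℚ) :=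
  funext fun p => (rescale_apply _ p).symm

open MonoidAlgebra in
/-- The linear endomorphism `γ` of the magma algebra determined on basis monomials by
`γ z = f z • z` is bijective, fixes the generators, and intertwines the magmatic
product `·` with the rescaled product `∗`; i.e. it is an isomorphism of magmatic
algebras from `(A, ·)` onto `(A, ∗)`. -/
theorem gamma_isomorphism_of_magmatic_products (E : Type*) (d : E → ℕ)
    (hd : ∀ a : E, 1 ≤ d a) :
    (∃ γ : FreeNonUnitalNonAssocAlgebra ℚ E →ₗ[ℚ] FreeNonUnitalNonAssocAlgebra ℚ E,
      ∀ z : FreeMagma E, γ (magmaMonomial z) = (FreeMagma.fcoef d z : ℚ) • magmaMonomial z) ∧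
    ∀ γ : FreeNonUnitalNonAssocAlgebra ℚ E →ₗ[ℚ] FreeNonUnitalNonAssocAlgebra ℚ E,
      (∀ z : FreeMagma E, γ (magmaMonomial z) = (FreeMagma.fcoef d z : ℚ) • magmaMonomial z) →
      Function.Bijective γ ∧
      (∀ a : E, γ (FreeNonUnitalNonAssocAlgebra.of ℚ a) = FreeNonUnitalNonAssocAlgebra.of ℚ a) ∧
      (∀ u v : FreeNonUnitalNonAssocAlgebra ℚ E, γ (u * v) = starProd d (γ u) (γ v)) := by
  set f : FreeMagma E → ℚ := fun z => FreeMagma.fcoef d z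
  set deg : FreeMagma E → ℚ := fun z => FreeMagma.mdeg d z
  refine ⟨⟨rescale f, eq_rescale_iff.mp rfl⟩, fun γ hγ => ?_⟩
  obtain rfl : γ = rescale f := eq_rescale_iff.mpr hγ
  refine ⟨rescale_bijective fun z => Nat.cast_ne_zero.mpr (FreeMagma.fcoef_pos d hd z).ne',
    fun a => ?_, fun u v => ?_⟩
  · have hfa : f (.of a) = 1 := Nat.cast_one
    exact (rescale_single f (.of a) 1).trans (by rw [hfa, one_mul]; rfl)
  · have hf : ∀ x y, f (x * y) = (deg * f) x * f y := fun x y => by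
      simp [f, deg, FreeMagma.fcoef_mul]
    rw [rescale_mul hf, ← rescale_comp_rescale, starProd, degScale_eq_rescale]
    rfl
end

section
/- The two-sided ideal of A generated by the elements x∗y + y∗x and x∗(y∗z) + y∗(z∗x) + z∗(x∗y), for x, y, z ∈ FreeMagma E, is equal to the two-sided ideal J' of A generated by the pre-Lie associator elements x·(y·z) − (x·y)·z − y·(x·z) + (y·x)·z together with the weighted anti-symmetry elements |x|·(x·y) + |y|·(y·x), for x, y, z ∈ FreeMagma E. -/
/-- A ℚ-submodule of the magma algebra which is stable under left and right
multiplication by arbitrary elements: a two-sided ideal. -/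
def IsTwoSidedIdealSubmodule {E : Type*}
    (I : Submodule ℚ (FreeNonUnitalNonAssocAlgebra ℚ E)) : Prop :=
  ∀ a x : FreeNonUnitalNonAssocAlgebra ℚ E, x ∈ I → a * x ∈ I ∧ x * a ∈ I

/-- The smallest two-sided ideal (ℚ-submodule closed under left and right multiplication)
containing a given set. -/
noncomputable def twoSidedIdealGen {E : Type*} (S : Set (FreeNonUnitalNonAssocAlgebra ℚ E)) :
    Submodule ℚ (FreeNonUnitalNonAssocAlgebra ℚ E) :=
  sInf {I | IsTwoSidedIdealSubmodule I ∧ S ⊆ I}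

/-!
On monomials `x ∗ y = |x| • xy`, so the `∗`-anti-symmetry elements are exactly the weighted
anti-symmetry elements `A(x, y) = |x| • xy + |y| • yx`, and the `∗`-Jacobi element is
`J(x, y, z) = |x||y| • x(yz) + |y||z| • y(zx) + |z||x| • z(xy)`. Modulo the ideal generated by
the `A`'s, `J(x, y, z)` is congruent to `|x||y|` times the pre-Lie associator `P(x, y, z)`:
`J − |x||y| • P = |y| • y·A(z, x) + |x| • A(z, xy) − |x| • A(x, y)·z`.
Since degrees are positive, `|x||y|` is invertible in `ℚ`, so in any ideal containing the `A`'s,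
`P(x, y, z)` lies in the ideal iff `J(x, y, z)` does.
-/

section Monomials

variable {E : Type*} (d : E → ℕ)

theorem FreeMagma.mdeg_mul (x y : FreeMagma E) :
    FreeMagma.mdeg d (x * y) = FreeMagma.mdeg d x + FreeMagma.mdeg d y := rfl

theorem FreeMagma.mdeg_pos_s3 (hd : ∀ a : E, 1 ≤ d a) : ∀ x : FreeMagma E, 0 < FreeMagma.mdeg d x
  | .of a => hd a
  | .mul x _ => Nat.add_pos_left (FreeMagma.mdeg_pos_s3 hd x) _

theorem magmaMonomial_mul (x y : FreeMagma E) :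
    magmaMonomial x * magmaMonomial y = magmaMonomial (x * y) := by
  simp [magmaMonomial, MonoidAlgebra.single_mul_single]

theorem degScale_magmaMonomial (x : FreeMagma E) :
    degScale d (magmaMonomial x) = (FreeMagma.mdeg d x : ℚ) • magmaMonomial x := by
  rw [degScale, magmaMonomial, MonoidAlgebra.coeff_single, Finsupp.sum_single_index (by simp)]
  simp

theorem starProd_magmaMonomial (x y : FreeMagma E) :
    starProd d (magmaMonomial x) (magmaMonomial y) =
      (FreeMagma.mdeg d x : ℚ) • magmaMonomial (x * y) := by
  rw [starProd, degScale_magmaMonomial, smul_mul_assoc, magmaMonomial_mul]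

theorem starProd_smul_right (p q : FreeNonUnitalNonAssocAlgebra ℚ E) (c : ℚ) :
    starProd d p (c • q) = c • starProd d p q :=
  mul_smul_comm c _ q

end Monomials

section Relations

variable {E : Type*} (d : E → ℕ)

noncomputable def weightedAntisymm (x y : FreeMagma E) : FreeNonUnitalNonAssocAlgebra ℚ E :=
  (FreeMagma.mdeg d x : ℚ) • magmaMonomial (x * y) +
    (FreeMagma.mdeg d y : ℚ) • magmaMonomial (y * x)

noncomputable def preLieAssociator (x y z : FreeMagma E) : FreeNonUnitalNonAssocAlgebra ℚ E :=
  magmaMonomial (x * (y * z)) - magmaMonomial (x * y * z) -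
    magmaMonomial (y * (x * z)) + magmaMonomial (y * x * z)

noncomputable def weightedJacobi (x y z : FreeMagma E) : FreeNonUnitalNonAssocAlgebra ℚ E :=
  ((FreeMagma.mdeg d x : ℚ) * FreeMagma.mdeg d y) • magmaMonomial (x * (y * z)) +
    ((FreeMagma.mdeg d y : ℚ) * FreeMagma.mdeg d z) • magmaMonomial (y * (z * x)) +
    ((FreeMagma.mdeg d z : ℚ) * FreeMagma.mdeg d x) • magmaMonomial (z * (x * y))

theorem starProd_antisymm_eq_weightedAntisymm (x y : FreeMagma E) :
    starProd d (magmaMonomial x) (magmaMonomial y) +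
      starProd d (magmaMonomial y) (magmaMonomial x) = weightedAntisymm d x y := by
  rw [starProd_magmaMonomial, starProd_magmaMonomial, weightedAntisymm]

theorem starProd_jacobi_eq_weightedJacobi (x y z : FreeMagma E) :
    starProd d (magmaMonomial x) (starProd d (magmaMonomial y) (magmaMonomial z)) +
      starProd d (magmaMonomial y) (starProd d (magmaMonomial z) (magmaMonomial x)) +
      starProd d (magmaMonomial z) (starProd d (magmaMonomial x) (magmaMonomial y)) =
      weightedJacobi d x y z := by
  simp only [starProd_magmaMonomial, starProd_smul_right, smul_smul, weightedJacobi, mul_comm]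

theorem magmaMonomial_associator_eq_preLieAssociator (x y z : FreeMagma E) :
    magmaMonomial x * (magmaMonomial y * magmaMonomial z) -
      (magmaMonomial x * magmaMonomial y) * magmaMonomial z -
      magmaMonomial y * (magmaMonomial x * magmaMonomial z) +
      (magmaMonomial y * magmaMonomial x) * magmaMonomial z = preLieAssociator x y z := by
  simp only [magmaMonomial_mul, preLieAssociator]

theorem smul_magmaMonomial_mul_eq_weightedAntisymm (x y : FreeMagma E) :
    (FreeMagma.mdeg d x : ℚ) • (magmaMonomial x * magmaMonomial y) +
      (FreeMagma.mdeg d y : ℚ) • (magmaMonomial y * magmaMonomial x) =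
      weightedAntisymm d x y := by
  simp only [magmaMonomial_mul, weightedAntisymm]

theorem weightedJacobi_sub_smul_preLieAssociator (x y z : FreeMagma E) :
    weightedJacobi d x y z -
        ((FreeMagma.mdeg d x : ℚ) * FreeMagma.mdeg d y) • preLieAssociator x y z =
      (FreeMagma.mdeg d y : ℚ) • (magmaMonomial y * weightedAntisymm d z x) +
        (FreeMagma.mdeg d x : ℚ) • weightedAntisymm d z (x * y) -
        (FreeMagma.mdeg d x : ℚ) • (weightedAntisymm d x y * magmaMonomial z) := by
  simp only [weightedJacobi, preLieAssociator, weightedAntisymm, mul_add, add_mul,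
    mul_smul_comm, smul_mul_assoc, magmaMonomial_mul, FreeMagma.mdeg_mul, Nat.cast_add]
  module

end Relations

section Ideals

variable {E : Type*}

theorem subset_twoSidedIdealGen (S : Set (FreeNonUnitalNonAssocAlgebra ℚ E)) :
    S ⊆ twoSidedIdealGen S :=
  fun _ hx => Submodule.mem_sInf.2 fun _ hI => hI.2 hx

theorem isTwoSidedIdealSubmodule_twoSidedIdealGen (S : Set (FreeNonUnitalNonAssocAlgebra ℚ E)) :
    IsTwoSidedIdealSubmodule (twoSidedIdealGen S) := fun a _ hx =>
  ⟨Submodule.mem_sInf.2 fun I hI => (hI.1 a _ (Submodule.mem_sInf.1 hx I hI)).1,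
    Submodule.mem_sInf.2 fun I hI => (hI.1 a _ (Submodule.mem_sInf.1 hx I hI)).2⟩

theorem twoSidedIdealGen_le {S : Set (FreeNonUnitalNonAssocAlgebra ℚ E)}
    {T : Submodule ℚ (FreeNonUnitalNonAssocAlgebra ℚ E)}
    (hT : IsTwoSidedIdealSubmodule T) (hS : S ⊆ T) : twoSidedIdealGen S ≤ T :=
  sInf_le ⟨hT, hS⟩

theorem preLieAssociator_mem_iff_weightedJacobi_mem {d : E → ℕ} (hd : ∀ a : E, 1 ≤ d a)
    {T : Submodule ℚ (FreeNonUnitalNonAssocAlgebra ℚ E)} (hT : IsTwoSidedIdealSubmodule T)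
    (hA : ∀ x y, weightedAntisymm d x y ∈ T) (x y z : FreeMagma E) :
    preLieAssociator x y z ∈ T ↔ weightedJacobi d x y z ∈ T := by
  have hxy : ((FreeMagma.mdeg d x : ℚ) * FreeMagma.mdeg d y) ≠ 0 := by
    have := FreeMagma.mdeg_pos_s3 d hd x
    have := FreeMagma.mdeg_pos_s3 d hd y
    positivity
  have hdiff_mem : weightedJacobi d x y z -
      ((FreeMagma.mdeg d x : ℚ) * FreeMagma.mdeg d y) • preLieAssociator x y z ∈ T := by
    rw [weightedJacobi_sub_smul_preLieAssociator]
    exact T.sub_mem (T.add_mem (T.smul_mem _ (hT _ _ (hA z x)).1) (T.smul_mem _ (hA z _)))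
      (T.smul_mem _ (hT _ _ (hA x y)).2)
  rw [← T.smul_mem_iff hxy]
  exact ⟨fun hP => (T.sub_mem_iff_left hP).1 hdiff_mem,
    fun hJ => (T.sub_mem_iff_right hJ).1 hdiff_mem⟩

end Ideals

/-- The two-sided ideal generated by the `∗`-anti-symmetry and `∗`-Jacobi elements
coincides with the two-sided ideal `J'` generated by the pre-Lie associators together
with the weighted anti-symmetry elements. -/
theorem star_lie_ideal_eq_preLie_weighted_ideal (E : Type*) (d : E → ℕ)
    (hd : ∀ a : E, 1 ≤ d a) :
    twoSidedIdealGen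
      ({v | ∃ x y : FreeMagma E,
          v = starProd d (magmaMonomial x) (magmaMonomial y) +
              starProd d (magmaMonomial y) (magmaMonomial x)} ∪
       {v | ∃ x y z : FreeMagma E,
          v = starProd d (magmaMonomial x) (starProd d (magmaMonomial y) (magmaMonomial z)) +
              starProd d (magmaMonomial y) (starProd d (magmaMonomial z) (magmaMonomial x)) +
              starProd d (magmaMonomial z) (starProd d (magmaMonomial x) (magmaMonomial y))}) =
    twoSidedIdealGen
      ({v | ∃ x y z : FreeMagma E,
          v = magmaMonomial x * (magmaMonomial y * magmaMonomial z) -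
              (magmaMonomial x * magmaMonomial y) * magmaMonomial z -
              magmaMonomial y * (magmaMonomial x * magmaMonomial z) +
              (magmaMonomial y * magmaMonomial x) * magmaMonomial z} ∪
       {v | ∃ x y : FreeMagma E,
          v = (FreeMagma.mdeg d x : ℚ) • (magmaMonomial x * magmaMonomial y) +
              (FreeMagma.mdeg d y : ℚ) • (magmaMonomial y * magmaMonomial x)}) := by
  simp only [starProd_antisymm_eq_weightedAntisymm, starProd_jacobi_eq_weightedJacobi,
    magmaMonomial_associator_eq_preLieAssociator, smul_magmaMonomial_mul_eq_weightedAntisymm]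
  set SA := {v | ∃ x y : FreeMagma E, v = weightedAntisymm d x y}
  set SJ := {v | ∃ x y z : FreeMagma E, v = weightedJacobi d x y z}
  set SP := {v | ∃ x y z : FreeMagma E, v = preLieAssociator x y z}
  have hA₁ x y : weightedAntisymm d x y ∈ twoSidedIdealGen (SA ∪ SJ) :=
    subset_twoSidedIdealGen _ (Or.inl ⟨x, y, rfl⟩)
  have hA₂ x y : weightedAntisymm d x y ∈ twoSidedIdealGen (SP ∪ SA) :=
    subset_twoSidedIdealGen _ (Or.inr ⟨x, y, rfl⟩)
  have hPJ₁ := preLieAssociator_mem_iff_weightedJacobi_mem hd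
    (isTwoSidedIdealSubmodule_twoSidedIdealGen _) hA₁
  have hPJ₂ := preLieAssociator_mem_iff_weightedJacobi_mem hd
    (isTwoSidedIdealSubmodule_twoSidedIdealGen _) hA₂
  apply le_antisymm <;> refine twoSidedIdealGen_le (isTwoSidedIdealSubmodule_twoSidedIdealGen _) ?_
  · rintro v (⟨x, y, rfl⟩ | ⟨x, y, z, rfl⟩)
    · exact hA₂ x y
    · exact (hPJ₂ x y z).1 (subset_twoSidedIdealGen _ (Or.inl ⟨x, y, z, rfl⟩))
  · rintro v (⟨x, y, z, rfl⟩ | ⟨x, y, rfl⟩)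
    · exact (hPJ₁ x y z).2 (subset_twoSidedIdealGen _ (Or.inr ⟨x, y, z, rfl⟩))
    · exact hA₁ x y
end

section
/- The relation ≼ is a linear order on FreeMagma E, it is a well-order (every nonempty subset has a least element), and it is monomial: if σ ≺ σ' then τ·σ ≺ τ·σ' and σ·τ ≺ σ'·τ for every τ ∈ FreeMagma E. -/
/-- The number of branches: `b a = 0` on generators and `b (x·y) = b y + 1`. -/
def FreeMagma.nbranch {E : Type*} : FreeMagma E → ℕ
  | .of _ => 0
  | .mul _ y => FreeMagma.nbranch y + 1

/-- The list of branches: `ℓ a = []` and `ℓ (x·y) = x :: ℓ y`. -/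
def FreeMagma.branchList {E : Type*} : FreeMagma E → List (FreeMagma E)
  | .of _ => []
  | .mul x y => x :: FreeMagma.branchList y

/-- The root: `r a = a` and `r (x·y) = r y`. -/
def FreeMagma.rootOf {E : Type*} : FreeMagma E → E
  | .of a => a
  | .mul _ y => FreeMagma.rootOf y

/-- The strict order `≺` on the free magma (planar `E`-decorated rooted trees):
compare by degree, then by number of branches, then lexicographically on the list of
branches, then by the root decoration. -/
inductive MagmaLt {E : Type*} [LT E] (d : E → ℕ) : FreeMagma E → FreeMagma E → Prop
  | deg {σ τ : FreeMagma E} : FreeMagma.mdeg d σ < FreeMagma.mdeg d τ → MagmaLt d σ τ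
  | branches {σ τ : FreeMagma E} : FreeMagma.mdeg d σ = FreeMagma.mdeg d τ →
      FreeMagma.nbranch σ < FreeMagma.nbranch τ → MagmaLt d σ τ
  | lex {σ τ : FreeMagma E} : FreeMagma.mdeg d σ = FreeMagma.mdeg d τ →
      FreeMagma.nbranch σ = FreeMagma.nbranch τ →
      List.Lex (MagmaLt d) (FreeMagma.branchList σ) (FreeMagma.branchList τ) → MagmaLt d σ τ
  | root {σ τ : FreeMagma E} : FreeMagma.mdeg d σ = FreeMagma.mdeg d τ →
      FreeMagma.nbranch σ = FreeMagma.nbranch τ →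
      FreeMagma.branchList σ = FreeMagma.branchList τ →
      FreeMagma.rootOf σ < FreeMagma.rootOf τ → MagmaLt d σ τ

/-!
The degree and the branch number are read off a tree directly, while the lexicographic
comparison of branch lists recurses into strictly smaller trees; so irreflexivity, transitivity
and trichotomy hold by well-founded recursion on size. Since generators have degree at least one
and the degree fibres of `E` are finite, there are finitely many trees of bounded degree, and as
`≺` never lowers the degree it is well-founded. For monomiality, `τ · σ` has branch list
`τ :: ℓ(σ)`, so it is compared with `τ · σ'` exactly as `σ` with `σ'`; and `σ · τ`, `σ' · τ` have
the same branch number, so when their degrees agree they are compared by the first branches.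
-/

theorem wellFounded_of_le_of_finite_setOf_le {α : Type*} {r : α → α → Prop} [IsStrictOrder α r]
    (f : α → ℕ) (hf : ∀ ⦃a b⦄, r a b → f a ≤ f b) (hfin : ∀ n, {a | f a ≤ n}.Finite) :
    WellFounded r := by
  refine ⟨fun a => (Set.WellFoundedOn.acc_iff_wellFoundedOn.out 0 2).2 ?_⟩
  refine ((hfin (f a)).subset fun b hb => hf ?_).wellFoundedOn
  rwa [Relation.transGen_eq_self] at hb

namespace List

variable {α : Type*} {r : α → α → Prop}

theorem lex_or_eq_or_lex_of_forall_mem :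
    ∀ (l₁ l₂ : List α), (∀ x ∈ l₁, ∀ y ∈ l₂, r x y ∨ x = y ∨ r y x) →
      Lex r l₁ l₂ ∨ l₁ = l₂ ∨ Lex r l₂ l₁
  | [], [], _ => Or.inr (Or.inl rfl)
  | [], _ :: _, _ => Or.inl Lex.nil
  | _ :: _, [], _ => Or.inr (Or.inr Lex.nil)
  | a :: l₁, b :: l₂, h => by
    rcases h a mem_cons_self b mem_cons_self with hab | rfl | hba
    · exact Or.inl (Lex.rel hab)
    · have htail := lex_or_eq_or_lex_of_forall_mem l₁ l₂
        fun x hx y hy => h x (mem_cons_of_mem _ hx) y (mem_cons_of_mem _ hy)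
      rcases htail with h₁₂ | rfl | h₂₁
      · exact Or.inl (Lex.cons h₁₂)
      · exact Or.inr (Or.inl rfl)
      · exact Or.inr (Or.inr (Lex.cons h₂₁))
    · exact Or.inr (Or.inr (Lex.rel hba))

theorem Lex.trans_of_forall_mem {l₁ l₂ l₃ : List α}
    (h : ∀ x ∈ l₁, ∀ y ∈ l₂, ∀ z ∈ l₃, r x y → r y z → r x z)
    (h₁₂ : Lex r l₁ l₂) (h₂₃ : Lex r l₂ l₃) : Lex r l₁ l₃ := by
  induction h₁₂ generalizing l₃ with
  | nil => cases h₂₃ <;> exact Lex.nil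
  | rel hab =>
    cases h₂₃ with
    | rel hbc => exact Lex.rel (h _ mem_cons_self _ mem_cons_self _ mem_cons_self hab hbc)
    | cons => exact Lex.rel hab
  | cons _ ih =>
    cases h₂₃ with
    | rel hac => exact Lex.rel hac
    | cons h₂₃ =>
      refine Lex.cons (ih (fun x hx y hy z hz => ?_) h₂₃)
      exact h x (mem_cons_of_mem _ hx) y (mem_cons_of_mem _ hy) z (mem_cons_of_mem _ hz)

end List

namespace FreeMagma

variable {E : Type*}

@[simp]
theorem mdeg_mul_s5 (d : E → ℕ) (x y : FreeMagma E) : mdeg d (x * y) = mdeg d x + mdeg d y := rfl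

@[simp]
theorem nbranch_mul (x y : FreeMagma E) : nbranch (x * y) = nbranch y + 1 := rfl

@[simp]
theorem branchList_mul (x y : FreeMagma E) : branchList (x * y) = x :: branchList y := rfl

theorem one_le_mdeg {d : E → ℕ} (hd : ∀ a, 1 ≤ d a) : ∀ σ : FreeMagma E, 1 ≤ mdeg d σ
  | .of a => hd a
  | .mul x _ => (one_le_mdeg hd x).trans (Nat.le_add_right _ _)

theorem sizeOf_lt_of_mem_branchList :
    ∀ {σ x : FreeMagma E}, x ∈ branchList σ → sizeOf x < sizeOf σ
  | .mul y z, x, hx => by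
    rcases List.mem_cons.1 hx with rfl | hx
    · show sizeOf x < 1 + sizeOf x + sizeOf z
      omega
    · have := sizeOf_lt_of_mem_branchList hx
      show sizeOf x < 1 + sizeOf y + sizeOf z
      omega

theorem eq_of_branchList_eq_of_rootOf_eq :
    ∀ {σ τ : FreeMagma E}, branchList σ = branchList τ → rootOf σ = rootOf τ → σ = τ
  | .of _, .of _, _, hr => congrArg FreeMagma.of hr
  | .of _, .mul _ _, hl, _ | .mul _ _, .of _, hl, _ => nomatch hl
  | .mul _ _, .mul _ _, hl, hr => by
    rw [(List.cons.inj hl).1, eq_of_branchList_eq_of_rootOf_eq (List.cons.inj hl).2 hr]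

theorem finite_setOf_mdeg_le {d : E → ℕ} (hd : ∀ a, 1 ≤ d a)
    (hfib : ∀ n, {a : E | d a = n}.Finite) (n : ℕ) : {σ : FreeMagma E | mdeg d σ ≤ n}.Finite := by
  induction n with
  | zero =>
    exact Set.finite_empty.subset fun σ hσ =>
      Nat.not_succ_le_zero 0 ((one_le_mdeg hd σ).trans hσ)
  | succ n ih =>
    have hgen : {a : E | d a ≤ n + 1}.Finite :=
      ((Set.finite_Iic (n + 1)).biUnion fun k _ => hfib k).subset
        fun a ha => Set.mem_biUnion ha rfl
    refine ((hgen.image of).union (ih.image2 (· * ·) ih)).subset ?_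
    rintro (a | ⟨x, y⟩) hσ
    · exact Or.inl ⟨a, hσ, rfl⟩
    · have hσ : mdeg d x + mdeg d y ≤ n + 1 := hσ
      have := one_le_mdeg hd x
      have := one_le_mdeg hd y
      exact Or.inr ⟨x, show mdeg d x ≤ n by omega, y, show mdeg d y ≤ n by omega, rfl⟩

end FreeMagma

namespace MagmaLt

open FreeMagma

variable {E : Type*}

section LT

variable [LT E] {d : E → ℕ} {σ σ' : FreeMagma E}

theorem mdeg_le (h : MagmaLt d σ σ') : mdeg d σ ≤ mdeg d σ' := by
  cases h with
  | deg h => exact h.le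
  | branches h _ | lex h _ _ | root h _ _ _ => exact h.le

theorem mul_left (τ : FreeMagma E) (h : MagmaLt d σ σ') : MagmaLt d (τ * σ) (τ * σ') := by
  cases h with
  | deg h => exact .deg (by simpa using h)
  | branches hd hb => exact .branches (by simp [hd]) (by simpa using hb)
  | lex hd hb hl => exact .lex (by simp [hd]) (by simp [hb]) (by simpa using List.Lex.cons hl)
  | root hd hb hl hr => exact .root (by simp [hd]) (by simp [hb]) (by simp [hl]) hr

theorem mul_right (τ : FreeMagma E) (h : MagmaLt d σ σ') : MagmaLt d (σ * τ) (σ' * τ) := by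
  rcases h.mdeg_le.lt_or_eq with hlt | heq
  · exact .deg (by simpa using hlt)
  · exact .lex (by simp [heq]) rfl (by simpa using List.Lex.rel h)

end LT

section Preorder

variable [Preorder E] {d : E → ℕ}

theorem irrefl : ∀ σ : FreeMagma E, ¬ MagmaLt d σ σ
  | _, .deg h | _, .branches _ h | _, .root _ _ _ h => lt_irrefl _ h
  | .mul x y, .lex _ _ h => by
    cases h with
    | rel h => exact irrefl x h
    | cons h => exact irrefl y (.lex rfl rfl h)

theorem trans {σ τ ρ : FreeMagma E} (h₁ : MagmaLt d σ τ) (h₂ : MagmaLt d τ ρ) :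
    MagmaLt d σ ρ := by
  cases h₁ with
  | deg ha => exact .deg (ha.trans_le h₂.mdeg_le)
  | branches ha ha₂ =>
    cases h₂ with
    | deg hb => exact .deg (ha ▸ hb)
    | branches hb hb₂ => exact .branches (ha.trans hb) (ha₂.trans hb₂)
    | lex hb hb₂ _ | root hb hb₂ _ _ => exact .branches (ha.trans hb) (hb₂ ▸ ha₂)
  | lex ha ha₂ ha₃ =>
    cases h₂ with
    | deg hb => exact .deg (ha ▸ hb)
    | branches hb hb₂ => exact .branches (ha.trans hb) (ha₂ ▸ hb₂)
    | lex hb hb₂ hb₃ =>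
      refine .lex (ha.trans hb) (ha₂.trans hb₂) (ha₃.trans_of_forall_mem ?_ hb₃)
      intro x hx y hy z hz
      have := sizeOf_lt_of_mem_branchList hx
      have := sizeOf_lt_of_mem_branchList hy
      have := sizeOf_lt_of_mem_branchList hz
      exact trans
    | root hb hb₂ hb₃ _ => exact .lex (ha.trans hb) (ha₂.trans hb₂) (hb₃ ▸ ha₃)
  | root ha ha₂ ha₃ ha₄ =>
    cases h₂ with
    | deg hb => exact .deg (ha ▸ hb)
    | branches hb hb₂ => exact .branches (ha.trans hb) (ha₂ ▸ hb₂)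
    | lex hb hb₂ hb₃ => exact .lex (ha.trans hb) (ha₂.trans hb₂) (ha₃ ▸ hb₃)
    | root hb hb₂ hb₃ hb₄ =>
      exact .root (ha.trans hb) (ha₂.trans hb₂) (ha₃.trans hb₃) (ha₄.trans hb₄)
termination_by sizeOf σ + sizeOf τ + sizeOf ρ

end Preorder

variable [LinearOrder E] {d : E → ℕ}

theorem trichotomous (σ τ : FreeMagma E) : MagmaLt d σ τ ∨ σ = τ ∨ MagmaLt d τ σ := by
  rcases lt_trichotomy (mdeg d σ) (mdeg d τ) with hd | hd | hd
  · exact Or.inl (.deg hd)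
  swap
  · exact Or.inr (Or.inr (.deg hd))
  rcases lt_trichotomy (nbranch σ) (nbranch τ) with hb | hb | hb
  · exact Or.inl (.branches hd hb)
  swap
  · exact Or.inr (Or.inr (.branches hd.symm hb))
  have hbranches := List.lex_or_eq_or_lex_of_forall_mem (r := MagmaLt d) (branchList σ)
    (branchList τ) fun x hx y hy => by
      have := sizeOf_lt_of_mem_branchList hx
      have := sizeOf_lt_of_mem_branchList hy
      exact trichotomous x y
  rcases hbranches with hl | hl | hl
  · exact Or.inl (.lex hd hb hl)
  swap
  · exact Or.inr (Or.inr (.lex hd.symm hb.symm hl))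
  rcases lt_trichotomy (rootOf σ) (rootOf τ) with hr | hr | hr
  · exact Or.inl (.root hd hb hl hr)
  · exact Or.inr (Or.inl (eq_of_branchList_eq_of_rootOf_eq hl hr))
  · exact Or.inr (Or.inr (.root hd.symm hb.symm hl.symm hr))
termination_by sizeOf σ + sizeOf τ

instance : IsStrictTotalOrder (FreeMagma E) (MagmaLt d) where
  trichotomous σ τ h₁ h₂ := ((trichotomous σ τ).resolve_left h₁).resolve_right h₂
  irrefl := irrefl
  trans _ _ _ := trans

end MagmaLt

theorem magmaLt_isStrictTotalOrder_wellOrder_monomial_general (E : Type*) [LinearOrder E]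
    (d : E → ℕ) (hd : ∀ a : E, 1 ≤ d a)
    (hfib : ∀ n : ℕ, {a : E | d a = n}.Finite) :
    IsStrictTotalOrder (FreeMagma E) (MagmaLt d) ∧
    (∀ S : Set (FreeMagma E), S.Nonempty →
      ∃ m ∈ S, ∀ x ∈ S, MagmaLt d m x ∨ m = x) ∧
    (∀ σ σ' τ : FreeMagma E, MagmaLt d σ σ' →
      MagmaLt d (τ * σ) (τ * σ') ∧ MagmaLt d (σ * τ) (σ' * τ)) := by
  have hwf : WellFounded (MagmaLt d) := wellFounded_of_le_of_finite_setOf_le _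
    (fun _ _ => MagmaLt.mdeg_le) (FreeMagma.finite_setOf_mdeg_le hd hfib)
  refine ⟨inferInstance, fun S hS => ?_, fun σ σ' τ h => ⟨h.mul_left τ, h.mul_right τ⟩⟩
  obtain ⟨m, hmS, hmin⟩ := hwf.has_min S hS
  exact ⟨m, hmS, fun x hx =>
    (MagmaLt.trichotomous m x).imp_right fun h => h.resolve_right (hmin x hx)⟩

/-- The order `≼` on the free magma of planar decorated rooted trees is a linear order,
a well-order, and a monomial order. -/
theorem magmaLt_isStrictTotalOrder_wellOrder_monomial (E : Type*) [LinearOrder E]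
    (hwo : WellFoundedLT E) (d : E → ℕ) (hd : ∀ a : E, 1 ≤ d a)
    (hfib : ∀ n : ℕ, {a : E | d a = n}.Finite)
    (href : ∀ a b : E, d a < d b → a < b) :
    IsStrictTotalOrder (FreeMagma E) (MagmaLt d) ∧
    (∀ S : Set (FreeMagma E), S.Nonempty →
      ∃ m ∈ S, ∀ x ∈ S, MagmaLt d m x ∨ m = x) ∧
    (∀ σ σ' τ : FreeMagma E, MagmaLt d σ σ' →
      MagmaLt d (τ * σ) (τ * σ') ∧ MagmaLt d (σ * τ) (σ' * τ)) :=
  magmaLt_isStrictTotalOrder_wellOrder_monomial_general E d hd hfib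
end

section
/- Let ≤ be a monomial well-order on FreeMagma E and let I be a two-sided ideal of A. Then A is the internal direct sum of I and the ℚ-linear span of O(I): the ℚ-submodule I and Span_ℚ(O(I)) intersect in {0} and their sum is all of A. -/
/-- The maximal term `T f` of a nonzero element `f` of the magma algebra: the largest
monomial in its support, with respect to a given linear order on the free magma. -/
noncomputable def maxTerm {E : Type*} [LinearOrder (FreeMagma E)]
    (f : FreeNonUnitalNonAssocAlgebra ℚ E) (hf : f ≠ 0) : FreeMagma E :=
  f.coeff.support.max' (Finsupp.support_nonempty_iff.mpr (mt MonoidAlgebra.coeff_eq_zero.mp hf))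

/-- `T I`: the set of maximal terms of nonzero elements of `I`. -/
def maxTermSet {E : Type*} [LinearOrder (FreeMagma E)]
    (I : Submodule ℚ (FreeNonUnitalNonAssocAlgebra ℚ E)) : Set (FreeMagma E) :=
  {z | ∃ (f : FreeNonUnitalNonAssocAlgebra ℚ E) (hf : f ≠ 0), f ∈ I ∧ maxTerm f hf = z}

/-- `O I`: the complement of `T I` in the free magma. -/
def outTermSet {E : Type*} [LinearOrder (FreeMagma E)]
    (I : Submodule ℚ (FreeNonUnitalNonAssocAlgebra ℚ E)) : Set (FreeMagma E) :=
  (maxTermSet I)ᶜ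

/-! Every monomial `t` is the maximal term of some element of `I + span O(I)` (of an element
of `I` if `t ∈ T(I)`, of the monomial `t` itself otherwise), so subtracting a multiple of it
lowers the maximal term of any `f`, and well-foundedness finishes the reduction.
Conversely, the maximal term of a nonzero element of `I` lies in `T(I)`, so it cannot lie
in `span O(I)`. -/

section MaxTerm

variable {E : Type*} [LinearOrder (FreeMagma E)]

theorem maxTerm_mem_support (f : FreeNonUnitalNonAssocAlgebra ℚ E) (hf : f ≠ 0) :
    maxTerm f hf ∈ f.coeff.support :=
  Finset.max'_mem _ _

theorem coeff_maxTerm_ne_zero (f : FreeNonUnitalNonAssocAlgebra ℚ E) (hf : f ≠ 0) :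
    f.coeff (maxTerm f hf) ≠ 0 :=
  Finsupp.mem_support_iff.mp (maxTerm_mem_support f hf)

theorem le_maxTerm_of_mem_support {f : FreeNonUnitalNonAssocAlgebra ℚ E} (hf : f ≠ 0)
    {s : FreeMagma E} (hs : s ∈ f.coeff.support) : s ≤ maxTerm f hf :=
  Finset.le_max' _ _ hs

theorem maxTerm_magmaMonomial (t : FreeMagma E) (ht : magmaMonomial t ≠ 0) :
    maxTerm (magmaMonomial t) ht = t := by
  simp [maxTerm, magmaMonomial, MonoidAlgebra.coeff_single]

theorem maxTerm_sub_smul_lt {f g : FreeNonUnitalNonAssocAlgebra ℚ E} {t : FreeMagma E}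
    (hf : f ≠ 0) (hg : g ≠ 0) (hft : maxTerm f hf = t) (hgt : maxTerm g hg = t)
    (hne : f - (f.coeff t / g.coeff t) • g ≠ 0) :
    maxTerm (f - (f.coeff t / g.coeff t) • g) hne < t := by
  classical
  refine (Finset.max'_lt_iff _ _).mpr fun s hs => lt_of_le_of_ne ?_ ?_
  · rw [MonoidAlgebra.coeff_sub, MonoidAlgebra.coeff_smul] at hs
    rcases Finset.mem_union.mp (Finsupp.support_sub hs) with hsf | hsg
    · exact hft ▸ le_maxTerm_of_mem_support hf hsf
    · exact hgt ▸ le_maxTerm_of_mem_support hg (Finsupp.support_smul hsg)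
  · rintro rfl
    have hgs : g.coeff s ≠ 0 := hgt ▸ coeff_maxTerm_ne_zero g hg
    apply Finsupp.mem_support_iff.mp hs
    simp [MonoidAlgebra.coeff_sub, div_mul_cancel₀ _ hgs]

end MaxTerm

section OutTerms

variable {E : Type*} [LinearOrder (FreeMagma E)]
  (I : Submodule ℚ (FreeNonUnitalNonAssocAlgebra ℚ E))

theorem mem_span_outTermSet_iff (f : FreeNonUnitalNonAssocAlgebra ℚ E) :
    f ∈ Submodule.span ℚ (magmaMonomial '' outTermSet I) ↔
      ↑f.coeff.support ⊆ outTermSet I := by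
  rw [← MonoidAlgebra.mem_supported (R := ℚ) (S := ℚ),
    MonoidAlgebra.supported_eq_span_single]
  rfl

theorem disjoint_span_outTermSet :
    Disjoint I (Submodule.span ℚ (magmaMonomial '' outTermSet I)) := by
  rw [Submodule.disjoint_def]
  intro f hfI hfO
  by_contra hf
  exact (mem_span_outTermSet_iff I f).mp hfO (maxTerm_mem_support f hf) ⟨f, hf, hfI, rfl⟩

theorem exists_mem_sup_span_outTermSet_maxTerm_eq (t : FreeMagma E) :
    ∃ (g : FreeNonUnitalNonAssocAlgebra ℚ E) (hg : g ≠ 0),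
      g ∈ I ⊔ Submodule.span ℚ (magmaMonomial '' outTermSet I) ∧ maxTerm g hg = t := by
  by_cases ht : t ∈ maxTermSet I
  · obtain ⟨g, hg, hgI, hgt⟩ := ht
    exact ⟨g, hg, Submodule.mem_sup_left hgI, hgt⟩
  · have hne : magmaMonomial t ≠ 0 := by simp [magmaMonomial]
    exact ⟨magmaMonomial t, hne, Submodule.mem_sup_right (Submodule.subset_span ⟨t, ht, rfl⟩),
      maxTerm_magmaMonomial t hne⟩

theorem codisjoint_span_outTermSet [WellFoundedLT (FreeMagma E)] :
    Codisjoint I (Submodule.span ℚ (magmaMonomial '' outTermSet I)) := by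
  set S := Submodule.span ℚ (magmaMonomial '' outTermSet I)
  suffices h : ∀ t (f : FreeNonUnitalNonAssocAlgebra ℚ E) (hf : f ≠ 0),
      maxTerm f hf = t → f ∈ I ⊔ S by
    rw [codisjoint_iff, Submodule.eq_top_iff']
    intro f
    by_cases hf : f = 0
    · exact hf ▸ zero_mem _
    · exact h _ f hf rfl
  intro t
  induction t using WellFoundedLT.induction with
  | _ t ih =>
  intro f hf hft
  obtain ⟨g, hg, hgmem, hgt⟩ := exists_mem_sup_span_outTermSet_maxTerm_eq I t
  set c := f.coeff t / g.coeff t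
  rw [← sub_add_cancel f (c • g)]
  refine add_mem ?_ (Submodule.smul_mem _ c hgmem)
  by_cases hne : f - c • g = 0
  · exact hne ▸ zero_mem _
  · exact ih _ (maxTerm_sub_smul_lt hf hg hft hgt hne) _ hne rfl

theorem isCompl_span_outTermSet [WellFoundedLT (FreeMagma E)] :
    IsCompl I (Submodule.span ℚ (magmaMonomial '' outTermSet I)) :=
  ⟨disjoint_span_outTermSet I, codisjoint_span_outTermSet I⟩

end OutTerms

theorem magmaAlgebra_direct_sum_ideal_span_outTerms_general (E : Type*) [LinearOrder (FreeMagma E)]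
    (hwell : ∀ S : Set (FreeMagma E), S.Nonempty → ∃ m ∈ S, ∀ x ∈ S, m ≤ x)
    (I : Submodule ℚ (FreeNonUnitalNonAssocAlgebra ℚ E)) :
    I ⊓ Submodule.span ℚ (magmaMonomial '' outTermSet I) = ⊥ ∧
    I ⊔ Submodule.span ℚ (magmaMonomial '' outTermSet I) = ⊤ := by
  have : WellFoundedLT (FreeMagma E) := ⟨WellFounded.wellFounded_iff_has_min.mpr fun S hS =>
    let ⟨m, hm, hmin⟩ := hwell S hS
    ⟨m, hm, fun x hx => not_lt.mpr (hmin x hx)⟩⟩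
  exact ⟨(isCompl_span_outTermSet I).inf_eq_bot, (isCompl_span_outTermSet I).sup_eq_top⟩

/-- For a monomial well-order on the free magma and a two-sided ideal `I` of the magma
algebra `A`, the algebra is the internal direct sum of `I` and the linear span of the
monomials in `O(I)`. -/
theorem magmaAlgebra_direct_sum_ideal_span_outTerms (E : Type*) [LinearOrder (FreeMagma E)]
    (hmono : ∀ x y z : FreeMagma E, x < y → x * z < y * z ∧ z * x < z * y)
    (hwell : ∀ S : Set (FreeMagma E), S.Nonempty → ∃ m ∈ S, ∀ x ∈ S, m ≤ x)
    (I : Submodule ℚ (FreeNonUnitalNonAssocAlgebra ℚ E))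
    (hI : IsTwoSidedIdealSubmodule I) :
    I ⊓ Submodule.span ℚ (magmaMonomial '' outTermSet I) = ⊥ ∧
    I ⊔ Submodule.span ℚ (magmaMonomial '' outTermSet I) = ⊤ :=
  magmaAlgebra_direct_sum_ideal_span_outTerms_general E hwell I
end

section
/- Let ≤ be a monomial well-order on FreeMagma E and let I be a two-sided ideal of A. Then T(I) is a two-sided ideal of the magma FreeMagma E: if m ∈ T(I) then z·m ∈ T(I) and m·z ∈ T(I) for every z ∈ FreeMagma E. -/
/-! Multiplying `f` by a monomial `z` moves its support along `x ↦ z * x` (resp.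
`x ↦ x * z`), which is strictly monotone because the order is monomial. So the support of
the product is the image of the support of `f`, whence `T(z f) = z T(f)` and
`T(f z) = T(f) z`. -/

open MonoidAlgebra

section MaxTerm

variable {E : Type*} [LinearOrder (FreeMagma E)]

theorem maxTerm_eq_of_coeff_support_eq_image {φ : FreeMagma E → FreeMagma E} (hφ : Monotone φ)
    {f g : FreeNonUnitalNonAssocAlgebra ℚ E} (hf : f ≠ 0) (hg : g ≠ 0)
    (h : g.coeff.support = f.coeff.support.image φ) :
    maxTerm g hg = φ (maxTerm f hf) := by
  simp only [maxTerm, h, Finset.max'_image hφ]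

theorem map_maxTerm_mem_maxTermSet {I : Submodule ℚ (FreeNonUnitalNonAssocAlgebra ℚ E)}
    {φ : FreeMagma E → FreeMagma E} (hφ : Monotone φ)
    {f g : FreeNonUnitalNonAssocAlgebra ℚ E} (hf : f ≠ 0) (hgI : g ∈ I)
    (h : g.coeff.support = f.coeff.support.image φ) :
    φ (maxTerm f hf) ∈ maxTermSet I := by
  have hg : g ≠ 0 := by
    rintro rfl
    simp [Finsupp.support_eq_empty, hf] at h
  exact ⟨g, hg, hgI, maxTerm_eq_of_coeff_support_eq_image hφ hf hg h⟩

end MaxTerm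

theorem maxTermSet_is_magma_ideal_general (E : Type*) [LinearOrder (FreeMagma E)]
    (hmono : ∀ x y z : FreeMagma E, x < y → x * z < y * z ∧ z * x < z * y)
    (I : Submodule ℚ (FreeNonUnitalNonAssocAlgebra ℚ E))
    (hI : IsTwoSidedIdealSubmodule I) :
    ∀ m ∈ maxTermSet I, ∀ z : FreeMagma E,
      z * m ∈ maxTermSet I ∧ m * z ∈ maxTermSet I := by
  rintro m ⟨f, hf, hfI, rfl⟩ z
  have hleft : StrictMono (z * ·) := fun x y h => (hmono x y z h).2
  have hright : StrictMono (· * z) := fun x y h => (hmono x y z h).1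
  exact ⟨map_maxTerm_mem_maxTermSet hleft.monotone hf (hI (single z 1) f hfI).1
      (support_coeff_single_mul_eq_image f (by simp) hleft.injective),
    map_maxTerm_mem_maxTermSet hright.monotone hf (hI (single z 1) f hfI).2
      (support_coeff_mul_single_eq_image f (by simp) hright.injective)⟩

/-- For a monomial well-order on the free magma and a two-sided ideal `I` of the magma
algebra, the set `T(I)` of maximal terms of nonzero elements of `I` is a two-sided
ideal of the free magma. -/
theorem maxTermSet_is_magma_ideal (E : Type*) [LinearOrder (FreeMagma E)]
    (hmono : ∀ x y z : FreeMagma E, x < y → x * z < y * z ∧ z * x < z * y)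
    (hwell : ∀ S : Set (FreeMagma E), S.Nonempty → ∃ m ∈ S, ∀ x ∈ S, m ≤ x)
    (I : Submodule ℚ (FreeNonUnitalNonAssocAlgebra ℚ E))
    (hI : IsTwoSidedIdealSubmodule I) :
    ∀ m ∈ maxTermSet I, ∀ z : FreeMagma E,
      z * m ∈ maxTermSet I ∧ m * z ∈ maxTermSet I :=
  maxTermSet_is_magma_ideal_general E hmono I hI
end
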